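/- Let g : 2^V → [0,1] satisfy g(S) ≤ Σ_{v∈S} g({v}) for all S (subadditivity over singletons), and let W ⊆ V be a random subset with P(v ∈ W) ≥ c·g({v}) for all v. For any feasible family 𝓕 ⊆ 2^V closed under taking subsets, E[ max_{S∈𝓕, S⊆W} g(S) ] ≥ max over all deterministic lower bounds of the form established in Lemma 1; in particular, taking 𝓕 = {S : |S| ≤ k} and s-fold unions W = Ṽ_s with s ≥ (k/(cε₂))log(k/ε₁) and additionally assuming g monotone submodular, the greedy algorithm applied to Ṽ_s returns a set S_greedy with E[g(S_greedy)] ≥ (1 − 1/e)·[(1 − ε₁)·OPT − ε₂]. -/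

import Mathlib

/-!
Each greedy step closes at least a `1/k` fraction of the gap to `bestVal g k W` (submodularity
bounds the gap by the sum of the `k` marginal gains of an optimal set), so the greedy algorithm
achieves a `1 - 1/e` fraction of `bestVal g k W` on every ground set `W`, and it suffices to
bound the expectation of `g (S ∩ Ṽ_s)` for an optimal `S`. Submodularity gives
`g (S ∩ Ṽ_s) ≥ g S - ∑_{v ∈ S \ Ṽ_s} g {v}`, so the expected loss is `∑_{v ∈ S} P(v ∉ Ṽ_s) g {v}`,
and by independence `P(v ∉ Ṽ_s) ≤ exp (-s c g {v})`. An element with `g {v} ≤ ε₂ / k` loses at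
most `ε₂ / k`; any other is missed with probability at most `ε₁ / k` by the choice of `s`, and so
loses at most `ε₁ OPT / k`.
-/

open MeasureTheory ProbabilityTheory Finset

/-- The optimal value of max_{S ⊆ W, |S| ≤ k} g(S). -/
noncomputable def bestVal {V : Type*} [DecidableEq V]
    (g : Finset V → ℝ) (k : ℕ) (W : Finset V) : ℝ :=
  (W.powerset.filter (fun S => S.card ≤ k)).sup'
    ⟨∅, by simp⟩ g

section Submodular

variable {V : Type*} [DecidableEq V] {g : Finset V → ℝ}

def IsSubmodular (g : Finset V → ℝ) : Prop :=
  ∀ A B : Finset V, A ⊆ B → ∀ v ∉ B, g (insert v B) - g B ≤ g (insert v A) - g A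

def IsGreedyRun (g : Finset V → ℝ) (W : Finset V) (k : ℕ) (T : ℕ → Finset V) : Prop :=
  T 0 = ∅ ∧ ∀ ℓ < k, ∃ v ∈ W, T (ℓ + 1) = insert v (T ℓ) ∧
    ∀ w ∈ W, g (insert w (T ℓ)) ≤ g (insert v (T ℓ))

theorem le_bestVal {k : ℕ} {W S : Finset V} (hSW : S ⊆ W) (hSk : #S ≤ k) : g S ≤ bestVal g k W :=
  le_sup' g (by simp [hSW, hSk])

theorem exists_eq_bestVal (g : Finset V → ℝ) (k : ℕ) (W : Finset V) :
    ∃ S ⊆ W, #S ≤ k ∧ g S = bestVal g k W := by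
  obtain ⟨S, hS, hgS⟩ := exists_mem_eq_sup' (⟨∅, by simp⟩ : (W.powerset.filter (#· ≤ k)).Nonempty) g
  rw [mem_filter, mem_powerset] at hS
  exact ⟨S, hS.1, hS.2, hgS.symm⟩

theorem sub_le_sum_marginal (hsub : IsSubmodular g) (A T : Finset V) :
    g (A ∪ T) - g T ≤ ∑ v ∈ A \ T, (g (insert v T) - g T) := by
  induction A using Finset.induction_on with
  | empty => simp
  | insert a A ha ih =>
    by_cases haT : a ∈ T
    · rwa [insert_union, insert_eq_of_mem (mem_union_right _ haT), insert_sdiff_of_mem _ haT]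
    · have haAT : a ∉ A ∪ T := by simp [ha, haT]
      rw [insert_union, insert_sdiff_of_notMem _ haT, sum_insert fun h => ha (mem_sdiff.1 h).1]
      linarith [hsub T (A ∪ T) subset_union_right a haAT]

theorem sub_sum_le_inter (hsub : IsSubmodular g) (hempty : g ∅ = 0) (S W : Finset V) :
    g S - ∑ v ∈ S \ W, g {v} ≤ g (S ∩ W) := by
  have hmarg := sub_le_sum_marginal hsub S (S ∩ W)
  rw [union_eq_left.2 inter_subset_left, sdiff_inter_self_left] at hmarg
  have hsingle : ∀ v ∈ S \ W, g (insert v (S ∩ W)) - g (S ∩ W) ≤ g {v} := fun v hv => by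
    simpa [hempty] using
      hsub ∅ (S ∩ W) (empty_subset _) v fun h => (mem_sdiff.1 hv).2 (mem_inter.1 h).2
  linarith [sum_le_sum hsingle]

theorem sub_le_mul_greedy_gain (hmono : Monotone g) (hsub : IsSubmodular g) {k : ℕ}
    {W S T : Finset V} {v : V} (hSW : S ⊆ W) (hSk : #S ≤ k)
    (hv : ∀ w ∈ W, g (insert w T) ≤ g (insert v T)) :
    g S - g T ≤ k * (g (insert v T) - g T) := by
  have hgain : 0 ≤ g (insert v T) - g T := sub_nonneg.2 (hmono (subset_insert v T))
  have hcard : (#(S \ T) : ℝ) ≤ k := by exact_mod_cast (card_le_card sdiff_subset).trans hSk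
  calc g S - g T ≤ g (S ∪ T) - g T := by gcongr; exact hmono subset_union_left
    _ ≤ ∑ w ∈ S \ T, (g (insert w T) - g T) := sub_le_sum_marginal hsub S T
    _ ≤ ∑ _w ∈ S \ T, (g (insert v T) - g T) :=
        sum_le_sum fun w hw => by linarith [hv w (hSW (mem_sdiff.1 hw).1)]
    _ ≤ k * (g (insert v T) - g T) := by
        rw [sum_const, nsmul_eq_mul]; exact mul_le_mul_of_nonneg_right hcard hgain

theorem IsGreedyRun.one_sub_inv_exp_mul_bestVal_le (hmono : Monotone g) (hsub : IsSubmodular g)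
    (hempty : g ∅ = 0) {W : Finset V} {k : ℕ} {T : ℕ → Finset V} (hk : 1 ≤ k)
    (hT : IsGreedyRun g W k T) : (1 - 1 / Real.exp 1) * bestVal g k W ≤ g (T k) := by
  obtain ⟨S, hSW, hSk, hS⟩ := exists_eq_bestVal g k W
  have hk0 : (0 : ℝ) < k := by exact_mod_cast hk
  have hB0 : 0 ≤ bestVal g k W := hempty ▸ le_bestVal (empty_subset W) (by simp)
  have hgap : ∀ ℓ ≤ k, bestVal g k W - g (T ℓ) ≤ (1 - 1 / k) ^ ℓ * bestVal g k W := by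
    intro ℓ
    induction ℓ with
    | zero => simp [hT.1, hempty]
    | succ ℓ ih =>
      intro hℓ
      obtain ⟨v, -, hTv, hv⟩ := hT.2 ℓ hℓ
      have hstep := sub_le_mul_greedy_gain hmono hsub hSW hSk hv
      rw [hS, ← hTv] at hstep
      have hgain : (bestVal g k W - g (T ℓ)) / k ≤ g (T (ℓ + 1)) - g (T ℓ) := by
        rwa [div_le_iff₀' hk0]
      calc _ ≤ (bestVal g k W - g (T ℓ)) - (bestVal g k W - g (T ℓ)) / k := by linarith
        _ = (1 - 1 / k) * (bestVal g k W - g (T ℓ)) := by ring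
        _ ≤ (1 - 1 / k) * ((1 - 1 / k) ^ ℓ * bestVal g k W) := by
          gcongr
          · exact sub_nonneg.2 ((div_le_one hk0).2 (by exact_mod_cast hk))
          · exact ih (by omega)
        _ = (1 - 1 / k) ^ (ℓ + 1) * bestVal g k W := by ring
  have hpow : (1 - 1 / (k : ℝ)) ^ k ≤ 1 / Real.exp 1 := by
    simpa [Real.exp_neg] using
      Real.one_sub_div_pow_le_exp_neg (t := 1) (n := k) (by exact_mod_cast hk)
  nlinarith [hgap k le_rfl, mul_le_mul_of_nonneg_right hpow hB0]

end Submodular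

theorem setOf_notMem_biUnion {Ω ι V : Type*} [Fintype ι] [DecidableEq V] (W : ι → Ω → Finset V)
    (v : V) : {ω | v ∉ univ.biUnion (W · ω)} = ⋂ i, {ω | v ∈ W i ω}ᶜ := by
  ext ω; simp

section Sampling

variable {Ω : Type*} [MeasurableSpace Ω] {μ : Measure Ω} [IsProbabilityMeasure μ]

theorem measureReal_iInter_compl_of_iIndepSet {ι : Type*} [Fintype ι] {A : ι → Set Ω}
    (hA : ∀ i, MeasurableSet (A i)) (hind : iIndepSet A μ) :
    μ.real (⋂ i, (A i)ᶜ) = ∏ i, (1 - μ.real (A i)) := by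
  have hmeas : ∀ i, MeasurableSet[MeasurableSpace.generateFrom {A i}] (A i)ᶜ := fun i =>
    (MeasurableSpace.measurableSet_generateFrom (Set.mem_singleton _)).compl
  rw [measureReal_def, ((iIndepSet_iff_iIndep _ _).1 hind).meas_iInter hmeas, ENNReal.toReal_prod]
  exact prod_congr rfl fun i _ => probReal_compl_eq_one_sub (hA i)

theorem measureReal_iInter_compl_le_exp {ι : Type*} [Fintype ι] {A : ι → Set Ω}
    (hA : ∀ i, MeasurableSet (A i)) (hind : iIndepSet A μ) {p : ℝ} (hp : ∀ i, p ≤ μ.real (A i)) :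
    μ.real (⋂ i, (A i)ᶜ) ≤ Real.exp (-(Fintype.card ι * p)) := by
  rw [measureReal_iInter_compl_of_iIndepSet hA hind, neg_mul_eq_mul_neg, Real.exp_nat_mul,
    ← card_univ, ← prod_const]
  exact prod_le_prod (fun i _ => sub_nonneg.2 measureReal_le_one)
    fun i _ => (sub_le_sub_left (hp i) 1).trans (Real.one_sub_le_exp_neg p)

section RandomUnion

variable {ι V : Type*} [Fintype ι] [DecidableEq V] {W : ι → Ω → Finset V} {v : V}

theorem measurableSet_notMem_biUnion (hW : ∀ i, MeasurableSet {ω | v ∈ W i ω}) :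
    MeasurableSet {ω | v ∉ univ.biUnion (W · ω)} := by
  rw [setOf_notMem_biUnion]
  exact .iInter fun i => (hW i).compl

theorem measureReal_notMem_biUnion_le_exp (hW : ∀ i, MeasurableSet {ω | v ∈ W i ω})
    (hind : iIndepSet (fun i => {ω | v ∈ W i ω}) μ) {p : ℝ}
    (hp : ∀ i, p ≤ μ.real {ω | v ∈ W i ω}) :
    μ.real {ω | v ∉ univ.biUnion (W · ω)} ≤ Real.exp (-(Fintype.card ι * p)) := by
  rw [setOf_notMem_biUnion]
  exact measureReal_iInter_compl_le_exp hW hind hp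

end RandomUnion

theorem mul_sub_sum_measureReal_le_integral {V : Type*} [DecidableEq V] {g : Finset V → ℝ}
    (hsub : IsSubmodular g) (hempty : g ∅ = 0) {a : ℝ} (ha : 0 ≤ a) (S : Finset V)
    {W : Ω → Finset V} (hW : ∀ v, MeasurableSet {ω | v ∉ W ω}) {f : Ω → ℝ}
    (hf : Integrable f μ) (hfW : ∀ ω, a * g (S ∩ W ω) ≤ f ω) :
    a * (g S - ∑ v ∈ S, μ.real {ω | v ∉ W ω} * g {v}) ≤ ∫ ω, f ω ∂μ := by
  set F : Ω → ℝ := fun ω => g S - ∑ v ∈ S, {ω | v ∉ W ω}.indicator (fun _ => g {v}) ω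
  have hind : ∀ v ∈ S, Integrable ({ω | v ∉ W ω}.indicator fun _ => g {v}) μ :=
    fun v _ => (integrable_const _).indicator (hW v)
  have hFint : Integrable F μ := (integrable_const _).sub (integrable_finsetSum _ hind)
  have hintF : ∫ ω, F ω ∂μ = g S - ∑ v ∈ S, μ.real {ω | v ∉ W ω} * g {v} := by
    rw [integral_sub (integrable_const _) (integrable_finsetSum _ hind), integral_finsetSum _ hind]
    simp [integral_indicator_const _ (hW _)]
  have hFle : ∀ ω, F ω ≤ g (S ∩ W ω) := fun ω => by
    have hloss : ∑ v ∈ S, {ω | v ∉ W ω}.indicator (fun _ => g {v}) ω = ∑ v ∈ S \ W ω, g {v} := by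
      rw [sdiff_eq_filter, sum_filter]
      exact sum_congr rfl fun v _ => by by_cases hv : v ∈ W ω <;> simp [hv]
    simpa only [F, hloss] using sub_sum_le_inter hsub hempty S (W ω)
  rw [← hintF, ← integral_const_mul]
  exact integral_mono (hFint.const_mul a) hf fun ω =>
    (mul_le_mul_of_nonneg_left (hFle ω) ha).trans (hfW ω)

end Sampling

theorem mul_le_add_mul_of_le_exp_neg {q x M t δ η : ℝ} (hq1 : q ≤ 1) (hx0 : 0 ≤ x)
    (hxM : x ≤ M) (ht : 0 ≤ t) (hδ : 0 ≤ δ) (hη : 0 < η) (hlog : Real.log η⁻¹ ≤ t * δ)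
    (hq : q ≤ Real.exp (-(t * x))) : q * x ≤ δ + η * M := by
  have hηM : 0 ≤ η * M := mul_nonneg hη.le (hx0.trans hxM)
  rcases le_or_gt x δ with hxδ | hδx
  · nlinarith
  · have hqη : q ≤ η := by
      calc q ≤ Real.exp (-(t * x)) := hq
        _ ≤ Real.exp (-Real.log η⁻¹) := by gcongr; nlinarith
        _ = η := by rw [Real.exp_neg, Real.exp_log (inv_pos.2 hη), inv_inv]
    nlinarith

theorem sum_mul_le_of_le_exp_neg {ι : Type*} {S : Finset ι} {k : ℕ} (hSk : #S ≤ k)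
    {q x : ι → ℝ} {M t ε₁ ε₂ : ℝ} (hq1 : ∀ i, q i ≤ 1) (hx0 : ∀ i, 0 ≤ x i)
    (hxM : ∀ i ∈ S, x i ≤ M) (hM : 0 ≤ M) (ht : 0 ≤ t) (hε₁ : 0 < ε₁) (hε₂ : 0 < ε₂)
    (hlog : Real.log (k / ε₁) ≤ t * (ε₂ / k)) (hq : ∀ i, q i ≤ Real.exp (-(t * x i))) :
    ∑ i ∈ S, q i * x i ≤ ε₂ + ε₁ * M := by
  rcases Nat.eq_zero_or_pos k with rfl | hk
  · simp_all
    positivity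
  calc ∑ i ∈ S, q i * x i ≤ ∑ _i ∈ S, (ε₂ / k + ε₁ / k * M) := sum_le_sum fun i hi =>
        mul_le_add_mul_of_le_exp_neg (hq1 i) (hx0 i) (hxM i hi) ht (by positivity) (by positivity)
          (by rwa [inv_div]) (hq i)
    _ ≤ k * (ε₂ / k + ε₁ / k * M) := by rw [sum_const, nsmul_eq_mul]; gcongr
    _ = ε₂ + ε₁ * M := by field_simp

theorem stmt_18_general {V : Type*} [Fintype V] [DecidableEq V]
    {Ω : Type*} [MeasurableSpace Ω] (μ : Measure Ω) [IsProbabilityMeasure μ]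
    (g : Finset V → ℝ)
    (hg01 : ∀ S, 0 ≤ g S ∧ g S ≤ 1)
    (hmono : ∀ A B : Finset V, A ⊆ B → g A ≤ g B)
    (hsub : ∀ A B : Finset V, A ⊆ B → ∀ v ∉ B,
      g (insert v B) - g B ≤ g (insert v A) - g A)
    (hempty : g ∅ = 0)
    (k : ℕ) (hk : 1 ≤ k)
    (c : ℝ) (hc0 : 0 < c)
    (ε₁ ε₂ : ℝ) (hε₁ : ε₁ ∈ Set.Ioc (0:ℝ) 1) (hε₂ : ε₂ ∈ Set.Ioc (0:ℝ) 1)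
    (s : ℕ)
    (hslb : (s : ℝ) ≥ (k : ℝ) / (c * ε₂) * Real.log ((k : ℝ) / ε₁))
    (Vt : Fin s → Ω → Finset V)
    (hmeas : ∀ i (v : V), MeasurableSet {ω | v ∈ Vt i ω})
    (hindep : ∀ v : V, iIndepSet (fun i : Fin s => {ω | v ∈ Vt i ω}) μ)
    (hprob : ∀ i (v : V), c * g {v} ≤ (μ {ω | v ∈ Vt i ω}).toReal)
    (Vs : Ω → Finset V)
    (hVs : ∀ ω, Vs ω = Finset.univ.biUnion (fun i : Fin s => Vt i ω))
    -- S_greedy is obtained by running the greedy algorithm for k steps on Ṽ_s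
    (Sg : Ω → Finset V)
    (hgreedy : ∀ ω, ∃ T : ℕ → Finset V, T 0 = ∅ ∧ Sg ω = T k ∧
      ∀ ℓ < k, ∃ v ∈ Vs ω, T (ℓ + 1) = insert v (T ℓ) ∧
        ∀ w ∈ Vs ω, g (insert w (T ℓ)) ≤ g (insert v (T ℓ)))
    (hint : Integrable (fun ω => g (Sg ω)) μ) :
    ∫ ω, g (Sg ω) ∂μ ≥
      (1 - 1 / Real.exp 1) *
        ((1 - ε₁) * bestVal g k (Finset.univ : Finset V) - ε₂) := by
  obtain rfl : Vs = fun ω => univ.biUnion (Vt · ω) := funext hVs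
  have hε₂0 : 0 < ε₂ := hε₂.1
  obtain ⟨S, -, hSk, hS⟩ := exists_eq_bestVal g k univ
  set OPT := bestVal g k univ
  have hOPT : 0 ≤ OPT := hempty ▸ le_bestVal (empty_subset univ) (Nat.zero_le k)
  have hlog : Real.log (k / ε₁) ≤ s * c * (ε₂ / k) :=
    calc _ = k / (c * ε₂) * Real.log (k / ε₁) * (c * (ε₂ / k)) := by field_simp
      _ ≤ s * (c * (ε₂ / k)) := by gcongr
      _ = _ := by ring
  have hloss : ∑ v ∈ S, μ.real {ω | v ∉ univ.biUnion (Vt · ω)} * g {v} ≤ ε₂ + ε₁ * OPT :=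
    sum_mul_le_of_le_exp_neg hSk (fun _ => measureReal_le_one) (fun v => (hg01 {v}).1)
      (fun v _ => le_bestVal (subset_univ _) (by simpa using hk)) hOPT (by positivity) hε₁.1 hε₂0
      hlog fun v => by
        simpa [mul_assoc] using measureReal_notMem_biUnion_le_exp (hmeas · v) (hindep v) (hprob · v)
  have hexp : 0 ≤ 1 - 1 / Real.exp 1 :=
    sub_nonneg.2 ((div_le_one (Real.exp_pos 1)).2 (Real.one_le_exp zero_le_one))
  have hgreedyInter (ω : Ω) :
      (1 - 1 / Real.exp 1) * g (S ∩ univ.biUnion (Vt · ω)) ≤ g (Sg ω) := by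
    obtain ⟨T, hT0, hTk, hstep⟩ := hgreedy ω
    rw [hTk]
    refine le_trans ?_
      (IsGreedyRun.one_sub_inv_exp_mul_bestVal_le hmono hsub hempty hk ⟨hT0, hstep⟩)
    gcongr
    exact le_bestVal inter_subset_right ((card_le_card inter_subset_left).trans hSk)
  calc (1 - 1 / Real.exp 1) * ((1 - ε₁) * OPT - ε₂)
      ≤ (1 - 1 / Real.exp 1) * (g S - ∑ v ∈ S, μ.real {ω | v ∉ univ.biUnion (Vt · ω)} * g {v}) :=
        mul_le_mul_of_nonneg_left (by linarith) hexp
    _ ≤ ∫ ω, g (Sg ω) ∂μ :=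
        mul_sub_sum_measureReal_le_integral hsub hempty hexp S
          (fun v => measurableSet_notMem_biUnion (hmeas · v)) hint hgreedyInter

/-- Combining the sampling lemma with the greedy guarantee:
if Ṽ_s is the union of s ≥ (k/(cε₂))log(k/ε₁) i.i.d. random subsets, each
including every v with probability at least c·g({v}) (g monotone submodular,
g(∅)=0, values in [0,1]), then the greedy algorithm run for k steps on Ṽ_s
returns S_greedy with E[g(S_greedy)] ≥ (1 − 1/e)·[(1 − ε₁)·OPT − ε₂]. -/
theorem stmt_18 {V : Type*} [Fintype V] [DecidableEq V]
    {Ω : Type*} [MeasurableSpace Ω] (μ : Measure Ω) [IsProbabilityMeasure μ]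
    (g : Finset V → ℝ)
    (hg01 : ∀ S, 0 ≤ g S ∧ g S ≤ 1)
    (hmono : ∀ A B : Finset V, A ⊆ B → g A ≤ g B)
    (hsub : ∀ A B : Finset V, A ⊆ B → ∀ v ∉ B,
      g (insert v B) - g B ≤ g (insert v A) - g A)
    (hempty : g ∅ = 0)
    (k : ℕ) (hk : 1 ≤ k)
    (c : ℝ) (hc0 : 0 < c) (hc1 : c ≤ 1)
    (ε₁ ε₂ : ℝ) (hε₁ : ε₁ ∈ Set.Ioc (0:ℝ) 1) (hε₂ : ε₂ ∈ Set.Ioc (0:ℝ) 1)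
    (s : ℕ) (hs : 0 < s)
    (hslb : (s : ℝ) ≥ (k : ℝ) / (c * ε₂) * Real.log ((k : ℝ) / ε₁))
    (Vt : Fin s → Ω → Finset V)
    (hmeas : ∀ i (v : V), MeasurableSet {ω | v ∈ Vt i ω})
    (hindep : ∀ v : V, iIndepSet (fun i : Fin s => {ω | v ∈ Vt i ω}) μ)
    (hprob : ∀ i (v : V), c * g {v} ≤ (μ {ω | v ∈ Vt i ω}).toReal)
    (Vs : Ω → Finset V)
    (hVs : ∀ ω, Vs ω = Finset.univ.biUnion (fun i : Fin s => Vt i ω))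
    -- S_greedy is obtained by running the greedy algorithm for k steps on Ṽ_s
    (Sg : Ω → Finset V)
    (hgreedy : ∀ ω, ∃ T : ℕ → Finset V, T 0 = ∅ ∧ Sg ω = T k ∧
      ∀ ℓ < k, ∃ v ∈ Vs ω, T (ℓ + 1) = insert v (T ℓ) ∧
        ∀ w ∈ Vs ω, g (insert w (T ℓ)) ≤ g (insert v (T ℓ)))
    (hint : Integrable (fun ω => g (Sg ω)) μ) :
    ∫ ω, g (Sg ω) ∂μ ≥
      (1 - 1 / Real.exp 1) *
        ((1 - ε₁) * bestVal g k (Finset.univ : Finset V) - ε₂) :=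
  stmt_18_general μ g hg01 hmono hsub hempty k hk c hc0 ε₁ ε₂ hε₁ hε₂ s hslb Vt hmeas hindep hprob
    Vs hVs Sg hgreedy hint
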